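/- Assume D satisfies condition (H1) and σ ∈ C²_b(ℝ^d, L(ℝⁿ,ℝ^d)). Let 2 ≤ p < 3, let ω be a control function on [0,T], and let X = (X¹, X²) be a p-rough path over ℝⁿ controlled by ω. Let ε be the constant from the local rough Euler estimate (depending only on σ and C_D), and let Δ = {t_k}_{k=0}^N be a partition of [0,T] with sup_{0 ≤ k ≤ l ≤ N−1} |ω(t_k, t_{l+1}) − ω(t_k, t_l)| ≤ ε/2. Then there exists a constant C > 0, depending only on σ, p and D, such that for every rough Euler approximation (y^Δ, Φ^Δ) starting at y₀ ∈ cl(D) and all 0 ≤ s ≤ t ≤ T: (1) |y^Δ_t − y^Δ_s| ≤ C(1 + ω(0,T)) ω(s,t)^{1/p}, and (2) ‖Φ^Δ‖_{[s,t]} ≤ C(1 + ω(0,T)) ω(s,t)^{1/p}. -/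

import Mathlib

open MeasureTheory Set
open scoped RealInnerProductSpace

noncomputable section

/-- The set of inward unit normal vectors at `x` at radius `r`. -/
def normalVecsAt {d : ℕ} (D : Set (EuclideanSpace ℝ (Fin d)))
    (x : EuclideanSpace ℝ (Fin d)) (r : ℝ) : Set (EuclideanSpace ℝ (Fin d)) :=
  {v | ‖v‖ = 1 ∧ Metric.ball (x - r • v) r ∩ D = ∅}

/-- The set of inward unit normal vectors at `x`. -/
def normalCone {d : ℕ} (D : Set (EuclideanSpace ℝ (Fin d)))
    (x : EuclideanSpace ℝ (Fin d)) : Set (EuclideanSpace ℝ (Fin d)) :=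
  ⋃ r ∈ Set.Ioi (0 : ℝ), normalVecsAt D x r

/-- Condition (A). -/
def CondA {d : ℕ} (D : Set (EuclideanSpace ℝ (Fin d))) (r₀ : ℝ) : Prop :=
  0 < r₀ ∧ ∀ x ∈ frontier D,
    normalCone D x = normalVecsAt D x r₀ ∧ (normalCone D x).Nonempty

/-- Condition (B). -/
def CondB {d : ℕ} (D : Set (EuclideanSpace ℝ (Fin d))) (δ β : ℝ) : Prop :=
  0 < δ ∧ 1 ≤ β ∧ ∀ x ∈ frontier D, ∃ l : EuclideanSpace ℝ (Fin d), ‖l‖ = 1 ∧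
    ∀ y ∈ Metric.ball x δ ∩ frontier D, ∀ v ∈ normalCone D y, 1 / β ≤ ⟪l, v⟫

/-- `‖w‖_{∞,[s,t]}`, the supremum of increments of `w` over `[s,t]`. -/
def supNorm {E : Type*} [NormedAddCommGroup E] (w : ℝ → E) (s t : ℝ) : ℝ :=
  sSup ((fun q : ℝ × ℝ => ‖w q.2 - w q.1‖) '' {q | s ≤ q.1 ∧ q.1 ≤ q.2 ∧ q.2 ≤ t})

/-- `‖φ‖_{[s,t]}`, the total variation of `φ` on `[s,t]`. -/
def totalVar {E : Type*} [NormedAddCommGroup E] (φ : ℝ → E) (s t : ℝ) : ℝ :=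
  (eVariationOn φ (Set.Icc s t)).toReal

/-- A control function on `[0,T]`. -/
structure IsControl (T : ℝ) (ω : ℝ → ℝ → ℝ) : Prop where
  cont : ContinuousOn (fun q : ℝ × ℝ => ω q.1 q.2) {q | 0 ≤ q.1 ∧ q.1 ≤ q.2 ∧ q.2 ≤ T}
  diag : ∀ t, 0 ≤ t → t ≤ T → ω t t = 0
  superadd : ∀ s t u, 0 ≤ s → s ≤ t → t ≤ u → u ≤ T → ω s t + ω t u ≤ ω s u

/-- `(ξ, φ)` is a solution of the Skorohod problem associated with `w` on `[a,b]`. -/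
structure SkorohodSol {d : ℕ} (D : Set (EuclideanSpace ℝ (Fin d))) (a b : ℝ)
    (w ξ φ : ℝ → EuclideanSpace ℝ (Fin d)) : Prop where
  xi_cont : ContinuousOn ξ (Set.Icc a b)
  xi_mem : ∀ t ∈ Set.Icc a b, ξ t ∈ closure D
  phi_cont : ContinuousOn φ (Set.Icc a b)
  phi_bv : BoundedVariationOn φ (Set.Icc a b)
  phi_start : φ a = 0
  eqn : ∀ t ∈ Set.Icc a b, ξ t = w t + φ t
  localTime : ∃ (nv : ℝ → EuclideanSpace ℝ (Fin d)) (μ : Measure ℝ),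
    Measurable nv ∧
    (∀ s ∈ Set.Icc a b, ξ s ∈ frontier D → nv s ∈ normalCone D (ξ s)) ∧
    (∀ u v, a ≤ u → u ≤ v → v ≤ b → μ (Set.Ioc u v) = ENNReal.ofReal (totalVar φ u v)) ∧
    (∀ t ∈ Set.Icc a b,
      φ t = ∫ s in Set.Icc a t, (frontier D).indicator (fun _ => (1 : ℝ)) (ξ s) • nv s ∂μ)

/-- Condition (H1) with constant `C_D`: (A) holds, the Skorohod problem is uniquely
solvable on every subinterval of `[0,T]`, and `‖L(w)‖_{[s,t]} ≤ C_D ‖w‖_{∞,[s,t]}`. -/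
def CondH1 {d : ℕ} (D : Set (EuclideanSpace ℝ (Fin d))) (T C_D : ℝ) : Prop :=
  (∃ r₀, CondA D r₀) ∧ 0 < C_D ∧
  ∀ a b, 0 ≤ a → a ≤ b → b ≤ T →
    ∀ w : ℝ → EuclideanSpace ℝ (Fin d), ContinuousOn w (Set.Icc a b) →
      w a ∈ closure D →
      (∃ ξ φ, SkorohodSol D a b w ξ φ) ∧
      (∀ ξ φ ξ' φ', SkorohodSol D a b w ξ φ → SkorohodSol D a b w ξ' φ' →
        ∀ u ∈ Set.Icc a b, ξ u = ξ' u ∧ φ u = φ' u) ∧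
      (∀ ξ φ, SkorohodSol D a b w ξ φ →
        ∀ s u, a ≤ s → s ≤ u → u ≤ b → totalVar φ s u ≤ C_D * supNorm w s u)

/-- The elementary tensor `a ⊗ b ∈ ℝ^d ⊗ ℝ^n`, realized in `EuclideanSpace ℝ (Fin d × Fin n)`. -/
def outerTensor {d n : ℕ} (a : EuclideanSpace ℝ (Fin d)) (b : EuclideanSpace ℝ (Fin n)) :
    EuclideanSpace ℝ (Fin d × Fin n) :=
  (WithLp.equiv 2 (Fin d × Fin n → ℝ)).symm (fun q => a q.1 * b q.2)

/-- `I` is the (Riemann–Stieltjes/Young) integral `∫_a^b Φ(r) ⊗ dx_r`, the limit of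
left-endpoint Riemann–Stieltjes sums over partitions of `[a,b]` as mesh tends to `0`. -/
def IsRSTensorIntegral {d n : ℕ} (Φ : ℝ → EuclideanSpace ℝ (Fin d))
    (x : ℝ → EuclideanSpace ℝ (Fin n)) (a b : ℝ)
    (I : EuclideanSpace ℝ (Fin d × Fin n)) : Prop :=
  ∀ ε > (0 : ℝ), ∃ η > (0 : ℝ), ∀ (N : ℕ) (t : Fin (N + 1) → ℝ),
    Monotone t → t 0 = a → t (Fin.last N) = b →
    (∀ k : Fin N, t k.succ - t k.castSucc ≤ η) →
    ‖(∑ k : Fin N, outerTensor (Φ (t k.castSucc)) (x (t k.succ) - x (t k.castSucc))) - I‖ ≤ ε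

/-- The bilinear action of `A = Dσ(y) : ℝ^d → L(ℝⁿ, ℝ^d)` on a tensor
`τ ∈ ℝ^d ⊗ ℝⁿ`: `A(a ⊗ b) = (A a) b`, extended linearly. -/
def bilinApply {d n : ℕ}
    (A : EuclideanSpace ℝ (Fin d) →L[ℝ] EuclideanSpace ℝ (Fin n) →L[ℝ] EuclideanSpace ℝ (Fin d))
    (τ : EuclideanSpace ℝ (Fin d × Fin n)) : EuclideanSpace ℝ (Fin d) :=
  ∑ i : Fin d, ∑ j : Fin n,
    τ (i, j) • A (EuclideanSpace.single i 1) (EuclideanSpace.single j 1)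

/-- The action of `S : ℝⁿ → ℝ^d` on the first component of a tensor
`τ ∈ ℝⁿ ⊗ ℝⁿ`: `(S ⊗ id) τ ∈ ℝ^d ⊗ ℝⁿ`. -/
def mapFirst {d n : ℕ}
    (S : EuclideanSpace ℝ (Fin n) →L[ℝ] EuclideanSpace ℝ (Fin d))
    (τ : EuclideanSpace ℝ (Fin n × Fin n)) : EuclideanSpace ℝ (Fin d × Fin n) :=
  (WithLp.equiv 2 (Fin d × Fin n → ℝ)).symm
    (fun q => ∑ j : Fin n, τ (j, q.2) * S (EuclideanSpace.single j 1) q.1)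

/-- `σ` is `C²_b`: twice continuously differentiable and bounded with bounded
derivatives up to order 2. -/
def IsC2b {d n : ℕ}
    (σ : EuclideanSpace ℝ (Fin d) → EuclideanSpace ℝ (Fin n) →L[ℝ] EuclideanSpace ℝ (Fin d)) :
    Prop :=
  ContDiff ℝ 2 σ ∧ (∃ K, ∀ y, ‖σ y‖ ≤ K) ∧ (∃ K, ∀ y, ‖fderiv ℝ σ y‖ ≤ K) ∧
    (∃ K, ∀ y, @norm _ ContinuousLinearMap.hasOpNorm (fderiv ℝ (fderiv ℝ σ) y) ≤ K)

/-- `‖σ‖_∞`, the sup norm of `σ`. -/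
def sigmaSup {d n : ℕ}
    (σ : EuclideanSpace ℝ (Fin d) → EuclideanSpace ℝ (Fin n) →L[ℝ] EuclideanSpace ℝ (Fin d)) :
    ℝ :=
  ⨆ y, ‖σ y‖

/-- `t` is a partition `0 = t_0 < t_1 < ⋯ < t_N = T` of `[0,T]`. -/
def IsPartition (T : ℝ) {N : ℕ} (t : Fin (N + 1) → ℝ) : Prop :=
  StrictMono t ∧ t 0 = 0 ∧ t (Fin.last N) = T

/-- `(X¹, X²)` is a `p`-rough path over `ℝⁿ` on `[0,T]` controlled by `ω`:
both levels are continuous, Chen's identity holds and `|X^i_{s,t}| ≤ ω(s,t)^{i/p}`. -/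
structure IsRoughPath {n : ℕ} (T p : ℝ) (ω : ℝ → ℝ → ℝ)
    (X1 : ℝ → ℝ → EuclideanSpace ℝ (Fin n))
    (X2 : ℝ → ℝ → EuclideanSpace ℝ (Fin n × Fin n)) : Prop where
  cont1 : ContinuousOn (fun q : ℝ × ℝ => X1 q.1 q.2) {q | 0 ≤ q.1 ∧ q.1 ≤ q.2 ∧ q.2 ≤ T}
  cont2 : ContinuousOn (fun q : ℝ × ℝ => X2 q.1 q.2) {q | 0 ≤ q.1 ∧ q.1 ≤ q.2 ∧ q.2 ≤ T}
  chen1 : ∀ s t u, 0 ≤ s → s ≤ t → t ≤ u → u ≤ T → X1 s u = X1 s t + X1 t u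
  chen2 : ∀ s t u, 0 ≤ s → s ≤ t → t ≤ u → u ≤ T →
    X2 s u = X2 s t + X2 t u + outerTensor (X1 s t) (X1 t u)
  bound1 : ∀ s t, 0 ≤ s → s ≤ t → t ≤ T → ‖X1 s t‖ ≤ ω s t ^ (1 / p)
  bound2 : ∀ s t, 0 ≤ s → s ≤ t → t ≤ T → ‖X2 s t‖ ≤ ω s t ^ (2 / p)

/-- `(y, Φ)` is the rough Euler approximation associated with the partition `t`:
on each `[t_{k-1}, t_k]`, `(y, Φ(·) − Φ(t_{k-1}))` solves the Skorohod problem for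
`u ↦ y(t_{k-1}) + σ(y(t_{k-1})) X¹_{t_{k-1},u} + Dσ(y(t_{k-1}))(σ(y(t_{k-1})) X²_{t_{k-1},u})
+ Dσ(y(t_{k-1}))(∫_{t_{k-1}}^u (Φ(r) − Φ(t_{k-1})) ⊗ dx_r)`, where `x_r = X¹_{0,r}`. -/
def IsRoughEuler {d n : ℕ} (D : Set (EuclideanSpace ℝ (Fin d)))
    (σ : EuclideanSpace ℝ (Fin d) → EuclideanSpace ℝ (Fin n) →L[ℝ] EuclideanSpace ℝ (Fin d))
    (X1 : ℝ → ℝ → EuclideanSpace ℝ (Fin n))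
    (X2 : ℝ → ℝ → EuclideanSpace ℝ (Fin n × Fin n))
    {N : ℕ} (t : Fin (N + 1) → ℝ)
    (y Φ : ℝ → EuclideanSpace ℝ (Fin d)) (y₀ : EuclideanSpace ℝ (Fin d)) : Prop :=
  y (t 0) = y₀ ∧ Φ (t 0) = 0 ∧
  ∀ k : Fin N, ∃ Z : ℝ → EuclideanSpace ℝ (Fin d × Fin n),
    (∀ u ∈ Set.Icc (t k.castSucc) (t k.succ),
      IsRSTensorIntegral (fun r => Φ r - Φ (t k.castSucc)) (fun r => X1 0 r)
        (t k.castSucc) u (Z u)) ∧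
    SkorohodSol D (t k.castSucc) (t k.succ)
      (fun u => y (t k.castSucc) + σ (y (t k.castSucc)) (X1 (t k.castSucc) u) +
        bilinApply (fderiv ℝ σ (y (t k.castSucc)))
          (mapFirst (σ (y (t k.castSucc))) (X2 (t k.castSucc) u)) +
        bilinApply (fderiv ℝ σ (y (t k.castSucc))) (Z u))
      y (fun u => Φ u - Φ (t k.castSucc))

/-- The local rough Euler estimate with constant `ε` holds on `[0,T]` for the domain
`D`, the coefficient `σ` and the constant `C_D`: whenever `t_k ≤ s ≤ t` and
`ω(t_k,t) ≤ ε`, one has `‖Φ^Δ‖_{[s,t]} ≤ 2C_D‖σ‖_∞ ω(s,t)^{1/p}` and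
`|y^Δ_t − y^Δ_s| ≤ (1 + 2C_D‖σ‖_∞ + ‖σ‖_∞) ω(s,t)^{1/p}`. -/
def LocalRoughEstimate {d n : ℕ} (D : Set (EuclideanSpace ℝ (Fin d))) (T : ℝ)
    (σ : EuclideanSpace ℝ (Fin d) → EuclideanSpace ℝ (Fin n) →L[ℝ] EuclideanSpace ℝ (Fin d))
    (p C_D ε : ℝ) : Prop :=
  ∀ ω : ℝ → ℝ → ℝ, IsControl T ω →
  ∀ (X1 : ℝ → ℝ → EuclideanSpace ℝ (Fin n))
    (X2 : ℝ → ℝ → EuclideanSpace ℝ (Fin n × Fin n)),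
    IsRoughPath T p ω X1 X2 →
  ∀ (N : ℕ) (tt : Fin (N + 1) → ℝ), IsPartition T tt →
  ∀ (y Φ : ℝ → EuclideanSpace ℝ (Fin d)) (y₀ : EuclideanSpace ℝ (Fin d)),
    y₀ ∈ closure D → IsRoughEuler D σ X1 X2 tt y Φ y₀ →
  ∀ (k : Fin (N + 1)) (s t : ℝ), tt k ≤ s → s ≤ t → t ≤ T → ω (tt k) t ≤ ε →
    totalVar Φ s t ≤ 2 * C_D * sigmaSup σ * ω s t ^ (1 / p) ∧
    ‖y t - y s‖ ≤ (1 + 2 * C_D * sigmaSup σ + sigmaSup σ) * ω s t ^ (1 / p)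

/-
The argument is a greedy chaining along the partition. Since the `ω`-increments between
consecutive partition points are at most `ε/2`, from any partition point `t_k` with
`ω(t_k, t) > ε` one can walk to a partition point `t_c ≤ t` with `ε/2 < ω(t_k, t_c) ≤ ε`.
The local estimate covers `[t_k, t_c]`, and by superadditivity `ω(t_c, t) ≤ ω(t_k, t) - ε/2`,
so after at most `2ω(0,T)/ε + 1` blocks the local estimate covers the rest. Both
`(s,t) ↦ |y_t - y_s|` and `(s,t) ↦ ‖Φ‖_{[s,t]}` are subadditive, so the local bounds add up.
-/

theorem Real.rpow_lt_zero {x q : ℝ} (hx : x < 0) (hq : q ∈ Ioo (1 / 2) (3 / 2)) : x ^ q < 0 := by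
  rw [Real.rpow_def_of_neg hx]
  refine mul_neg_of_pos_of_neg (Real.exp_pos _) (Real.cos_neg_of_pi_div_two_lt_of_lt ?_ ?_) <;>
    nlinarith [Real.pi_pos, hq.1, hq.2]

/-- `IsControl` does not ask for `ω ≥ 0`; it follows from `‖X²‖ ≤ ω^{2/p}`, because `Real.rpow`
makes `x ^ q` negative for `x < 0` and `1/2 < q < 3/2`. -/
theorem IsRoughPath.control_nonneg {n : ℕ} {T p : ℝ} {ω : ℝ → ℝ → ℝ}
    {X1 : ℝ → ℝ → EuclideanSpace ℝ (Fin n)} {X2 : ℝ → ℝ → EuclideanSpace ℝ (Fin n × Fin n)}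
    (hX : IsRoughPath T p ω X1 X2) (hp : 4 / 3 < p) (hp' : p < 4) {s t : ℝ}
    (hs : 0 ≤ s) (hst : s ≤ t) (ht : t ≤ T) : 0 ≤ ω s t := by
  by_contra! hneg
  have hp₀ : 0 < p := by linarith
  have hq : 2 / p ∈ Ioo (1 / 2) (3 / 2) :=
    ⟨by rw [lt_div_iff₀ hp₀]; linarith, by rw [div_lt_iff₀ hp₀]; linarith⟩
  exact (norm_nonneg _).not_gt ((hX.bound2 s t hs hst ht).trans_lt (Real.rpow_lt_zero hneg hq))

theorem IsControl.mono {T : ℝ} {ω : ℝ → ℝ → ℝ} (hω : IsControl T ω)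
    (hω₀ : ∀ s t, 0 ≤ s → s ≤ t → t ≤ T → 0 ≤ ω s t) {a b a' b' : ℝ}
    (ha' : 0 ≤ a') (ha : a' ≤ a) (hab : a ≤ b) (hb : b ≤ b') (hb' : b' ≤ T) :
    ω a b ≤ ω a' b' := by
  have h₁ := hω.superadd a' a b ha' ha hab (by linarith)
  have h₂ := hω.superadd a' b b' ha' (by linarith) hb hb'
  have h₃ := hω₀ a' a ha' ha (by linarith)
  have h₄ := hω₀ b b' (by linarith) hb hb'
  linarith

theorem totalVar_le_add {E : Type*} [NormedAddCommGroup E] (φ : ℝ → E) {a b c : ℝ}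
    (hab : a ≤ b) (hbc : b ≤ c) : totalVar φ a c ≤ totalVar φ a b + totalVar φ b c := by
  have h := eVariationOn.Icc_add_Icc φ (s := univ) hab hbc (mem_univ b)
  simp only [univ_inter] at h
  rw [totalVar, ← h]
  exact ENNReal.toReal_add_le

theorem Nat.exists_mem_Ioc_of_sub_le {g : ℕ → ℝ} {a δ : ℝ} {k n : ℕ} (hkn : k ≤ n)
    (hk : g k ≤ a) (hn : a < g n) (hstep : ∀ i, k ≤ i → i < n → g (i + 1) - g i ≤ δ) :
    ∃ i, k ≤ i ∧ i < n ∧ g i ∈ Ioc (a - δ) a := by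
  classical
  have hex : ∃ j, k ≤ j ∧ a < g j := ⟨n, hkn, hn⟩
  obtain ⟨hkj, hj⟩ := Nat.find_spec hex
  have hjn : Nat.find hex ≤ n := Nat.find_min' hex ⟨hkn, hn⟩
  have hkj' : k ≠ Nat.find hex := fun h => hk.not_gt (h ▸ hj)
  obtain ⟨i, hi⟩ : ∃ i, Nat.find hex = i + 1 := Nat.exists_eq_succ_of_ne_zero (by omega)
  have hgi : g i ≤ a := not_lt.1 fun h => Nat.find_min hex (by omega) ⟨by omega, h⟩
  rw [hi] at hj
  exact ⟨i, by omega, by omega, by linarith [hstep i (by omega) (by omega)], hgi⟩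

section Chaining

variable {T ε A r : ℝ} {ω F : ℝ → ℝ → ℝ} {N : ℕ} {u : ℕ → ℝ}

theorem exists_grid_point_control_mem_Ioc (hω : IsControl T ω)
    (hω₀ : ∀ s t, 0 ≤ s → s ≤ t → t ≤ T → 0 ≤ ω s t) (hu : Monotone u) (hu₀ : 0 ≤ u 0)
    (huN : u N = T) (hmesh : ∀ k l, k ≤ l → l < N → ω (u k) (u (l + 1)) - ω (u k) (u l) ≤ ε / 2)
    (hε₀ : 0 ≤ ε) {k : ℕ} {t : ℝ} (hkt : u k ≤ t) (ht : t ≤ T) (hε : ε < ω (u k) t) :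
    ∃ c, u k ≤ u c ∧ u c ≤ t ∧ ω (u k) (u c) ∈ Ioc (ε / 2) ε := by
  have huk : 0 ≤ u k := hu₀.trans (hu (Nat.zero_le k))
  have hkN : k ≤ N := by
    by_contra! hNk
    have htk : t = u k := le_antisymm (ht.trans (huN ▸ hu hNk.le)) hkt
    rw [htk, hω.diag _ huk (htk ▸ ht)] at hε
    linarith
  have hεT : ε < ω (u k) (u N) :=
    hε.trans_le (hω.mono hω₀ huk le_rfl hkt (ht.trans_eq huN.symm) huN.le)
  obtain ⟨c, hkc, hcN, hc⟩ := Nat.exists_mem_Ioc_of_sub_le (g := fun j => ω (u k) (u j)) hkN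
    (by simp only [hω.diag _ huk (hkt.trans ht)]; exact hε₀) hεT (hmesh k)
  refine ⟨c, hu hkc, not_lt.1 fun hct => hε.not_ge ?_, by rwa [sub_half] at hc⟩
  exact (hω.mono hω₀ huk le_rfl hkt hct.le (huN ▸ hu hcN.le)).trans hc.2

theorem le_nat_mul_rpow_of_local_bound (hω : IsControl T ω)
    (hω₀ : ∀ s t, 0 ≤ s → s ≤ t → t ≤ T → 0 ≤ ω s t) (hu : Monotone u) (hu₀ : 0 ≤ u 0)
    (huN : u N = T) (hmesh : ∀ k l, k ≤ l → l < N → ω (u k) (u (l + 1)) - ω (u k) (u l) ≤ ε / 2)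
    (hε : 0 ≤ ε) (hA : 0 ≤ A) (hr : 0 ≤ r) (hF : ∀ a b c, a ≤ b → b ≤ c → F a c ≤ F a b + F b c)
    (hloc : ∀ k a b, u k ≤ a → a ≤ b → b ≤ T → ω (u k) b ≤ ε → F a b ≤ A * ω a b ^ r)
    (m : ℕ) {k : ℕ} {s t : ℝ} (hks : u k ≤ s) (hst : s ≤ t) (ht : t ≤ T)
    (hm : ω (u k) t ≤ m * (ε / 2)) : F s t ≤ A * (m + 1) * ω s t ^ r := by
  have hs₀ : 0 ≤ s := hu₀.trans ((hu (Nat.zero_le k)).trans hks)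
  have hrpow : 0 ≤ ω s t ^ r := Real.rpow_nonneg (hω₀ s t hs₀ hst ht) r
  induction m generalizing k s with
  | zero =>
    refine (hloc k s t hks hst ht (by linarith)).trans_eq ?_
    ring
  | succ m ih =>
    push_cast at hm ⊢
    have hmono : A * (m + 1) * ω s t ^ r ≤ A * (m + 1 + 1) * ω s t ^ r := by
      gcongr; linarith
    by_cases hsmall : ω (u k) t ≤ ε
    · refine (hloc k s t hks hst ht hsmall).trans (le_trans ?_ hmono)
      exact mul_le_mul_of_nonneg_right (le_mul_of_one_le_right hA (by linarith)) hrpow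
    obtain ⟨c, hkc, hct, hc⟩ := exists_grid_point_control_mem_Ioc hω hω₀ hu hu₀ huN hmesh hε
      (hks.trans hst) ht (not_le.1 hsmall)
    have hc₀ : 0 ≤ u c := hu₀.trans (hu (Nat.zero_le c))
    -- by superadditivity, the block `[u k, u c]` uses up more than `ε / 2` of `ω (u k) t`
    have hrest : ω (u c) t ≤ m * (ε / 2) := by
      have := hω.superadd _ _ _ (hu₀.trans (hu (Nat.zero_le k))) hkc hct ht
      linarith [hc.1]
    rcases le_total s (u c) with hsc | hcs
    · have hrpow_c : 0 ≤ ω (u c) t ^ r := Real.rpow_nonneg (hω₀ _ _ hc₀ hct ht) r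
      calc F s t ≤ F s (u c) + F (u c) t := hF _ _ _ hsc hct
        _ ≤ A * ω s (u c) ^ r + A * (m + 1) * ω (u c) t ^ r :=
          add_le_add (hloc k s (u c) hks hsc (hct.trans ht) hc.2) (ih le_rfl hct hrest hc₀ hrpow_c)
        _ ≤ A * ω s t ^ r + A * (m + 1) * ω s t ^ r := by
          have := hω₀ s (u c) hs₀ hsc (hct.trans ht)
          have := hω₀ (u c) t hc₀ hct ht
          gcongr
          · exact hω.mono hω₀ hs₀ le_rfl hsc hct ht
          · exact hω.mono hω₀ hs₀ hsc hct le_rfl ht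
        _ = A * (m + 1 + 1) * ω s t ^ r := by ring
    · exact (ih hcs hst hrest hs₀ hrpow).trans hmono

theorem le_mul_rpow_of_local_bound (hω : IsControl T ω)
    (hω₀ : ∀ s t, 0 ≤ s → s ≤ t → t ≤ T → 0 ≤ ω s t) (hu : Monotone u) (hu₀ : 0 ≤ u 0)
    (huN : u N = T) (hmesh : ∀ k l, k ≤ l → l < N → ω (u k) (u (l + 1)) - ω (u k) (u l) ≤ ε / 2)
    (hε : 0 < ε) (hA : 0 ≤ A) (hr : 0 ≤ r) (hF : ∀ a b c, a ≤ b → b ≤ c → F a c ≤ F a b + F b c)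
    (hloc : ∀ k a b, u k ≤ a → a ≤ b → b ≤ T → ω (u k) b ≤ ε → F a b ≤ A * ω a b ^ r)
    {s t : ℝ} (hs : u 0 ≤ s) (hst : s ≤ t) (ht : t ≤ T) :
    F s t ≤ A * (2 + 2 * ω (u 0) t / ε) * ω s t ^ r := by
  set m := ⌈2 * ω (u 0) t / ε⌉₊
  have hm : ω (u 0) t ≤ m * (ε / 2) := by
    have := Nat.le_ceil (2 * ω (u 0) t / ε)
    rw [div_le_iff₀ hε] at this
    linarith
  have hm' : (m : ℝ) + 1 ≤ 2 + 2 * ω (u 0) t / ε := by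
    have := Nat.ceil_lt_add_one
      (div_nonneg (mul_nonneg zero_le_two (hω₀ _ _ hu₀ (hs.trans hst) ht)) hε.le)
    linarith
  refine (le_nat_mul_rpow_of_local_bound hω hω₀ hu hu₀ huN hmesh hε.le hA hr hF hloc m hs hst ht
    hm).trans ?_
  have := Real.rpow_nonneg (hω₀ s t (hu₀.trans hs) hst ht) r
  gcongr

end Chaining

theorem le_mul_rpow_of_local_bound_of_partition {T ε A r : ℝ} {ω F : ℝ → ℝ → ℝ} {N : ℕ}
    {tt : Fin (N + 1) → ℝ} (hω : IsControl T ω) (hω₀ : ∀ s t, 0 ≤ s → s ≤ t → t ≤ T → 0 ≤ ω s t)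
    (htt : IsPartition T tt)
    (hmesh : ∀ (k : Fin (N + 1)) (l : Fin N), (k : ℕ) ≤ (l : ℕ) →
      |ω (tt k) (tt l.succ) - ω (tt k) (tt l.castSucc)| ≤ ε / 2)
    (hε : 0 < ε) (hA : 0 ≤ A) (hr : 0 ≤ r) (hF : ∀ a b c, a ≤ b → b ≤ c → F a c ≤ F a b + F b c)
    (hloc : ∀ (k : Fin (N + 1)) a b, tt k ≤ a → a ≤ b → b ≤ T → ω (tt k) b ≤ ε →
      F a b ≤ A * ω a b ^ r)
    {s t : ℝ} (hs : 0 ≤ s) (hst : s ≤ t) (ht : t ≤ T) :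
    F s t ≤ A * (2 + 2 / ε) * (1 + ω 0 T) * ω s t ^ r := by
  set u : ℕ → ℝ := fun j => tt (Fin.clamp j N)
  have hu₀ : u 0 = 0 := htt.2.1
  have huN : u N = T := by simp [u, Fin.clamp_eq_last, htt.2.2]
  have hmesh' : ∀ k l, k ≤ l → l < N → ω (u k) (u (l + 1)) - ω (u k) (u l) ≤ ε / 2 := by
    intro k l hkl hl
    convert (abs_le.1 (hmesh ⟨k, by omega⟩ ⟨l, hl⟩ hkl)).2 using 4 <;> ext <;> simp <;> omega
  have hFst := le_mul_rpow_of_local_bound (u := u) hω hω₀ (htt.1.monotone.comp Fin.clamp_monotone)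
    hu₀.ge huN hmesh' hε hA hr hF (fun k => hloc _) (hu₀.le.trans hs) hst ht
  rw [hu₀] at hFst
  refine hFst.trans (mul_le_mul_of_nonneg_right ?_ (Real.rpow_nonneg (hω₀ s t hs hst ht) r))
  have h0T := hω₀ 0 T le_rfl (hs.trans (hst.trans ht)) le_rfl
  calc A * (2 + 2 * ω 0 t / ε) ≤ A * (2 + 2 * ω 0 T / ε) := by
        gcongr
        exact hω.mono hω₀ le_rfl le_rfl (hs.trans hst) ht le_rfl
    _ ≤ A * (2 + 2 * ω 0 T / ε + (2 * ω 0 T + 2 / ε)) :=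
        mul_le_mul_of_nonneg_left (le_add_of_nonneg_right (by positivity)) hA
    _ = A * (2 + 2 / ε) * (1 + ω 0 T) := by ring

theorem rough_euler_global_estimate_general {d n : ℕ} (D : Set (EuclideanSpace ℝ (Fin d)))
    (T p C_D ε : ℝ) (hp : 2 ≤ p) (hp3 : p < 3)
    (σ : EuclideanSpace ℝ (Fin d) → EuclideanSpace ℝ (Fin n) →L[ℝ] EuclideanSpace ℝ (Fin d))
    (hH1 : CondH1 D T C_D)
    (hε : 0 < ε) (hLE : LocalRoughEstimate D T σ p C_D ε) :
    ∃ C : ℝ, 0 < C ∧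
      ∀ ω : ℝ → ℝ → ℝ, IsControl T ω →
      ∀ (X1 : ℝ → ℝ → EuclideanSpace ℝ (Fin n))
        (X2 : ℝ → ℝ → EuclideanSpace ℝ (Fin n × Fin n)),
        IsRoughPath T p ω X1 X2 →
      ∀ (N : ℕ) (tt : Fin (N + 1) → ℝ), IsPartition T tt →
        (∀ (k : Fin (N + 1)) (l : Fin N), (k : ℕ) ≤ (l : ℕ) →
          |ω (tt k) (tt l.succ) - ω (tt k) (tt l.castSucc)| ≤ ε / 2) →
      ∀ (y Φ : ℝ → EuclideanSpace ℝ (Fin d)) (y₀ : EuclideanSpace ℝ (Fin d)),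
        y₀ ∈ closure D → IsRoughEuler D σ X1 X2 tt y Φ y₀ →
      ∀ s t, 0 ≤ s → s ≤ t → t ≤ T →
        ‖y t - y s‖ ≤ C * (1 + ω 0 T) * ω s t ^ (1 / p) ∧
        totalVar Φ s t ≤ C * (1 + ω 0 T) * ω s t ^ (1 / p) := by
  obtain ⟨-, hC_D, -⟩ := hH1
  have hσ : 0 ≤ sigmaSup σ := Real.iSup_nonneg fun _ => norm_nonneg _
  refine ⟨(1 + 2 * C_D * sigmaSup σ + sigmaSup σ) * (2 + 2 / ε), by positivity, ?_⟩
  intro ω hω X1 X2 hX N tt htt hmesh y Φ y₀ hy₀ hyΦ s t hs hst ht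
  have hω₀ : ∀ a b, 0 ≤ a → a ≤ b → b ≤ T → 0 ≤ ω a b :=
    fun a b => hX.control_nonneg (by linarith) (by linarith)
  have hloc := hLE ω hω X1 X2 hX N tt htt y Φ y₀ hy₀ hyΦ
  have hy_tri : ∀ a b c : ℝ, a ≤ b → b ≤ c → ‖y c - y a‖ ≤ ‖y b - y a‖ + ‖y c - y b‖ :=
    fun a b c _ _ => by rw [add_comm]; exact norm_sub_le_norm_sub_add_norm_sub _ _ _
  have hy := le_mul_rpow_of_local_bound_of_partition hω hω₀ htt hmesh hε (by positivity)
    (by positivity) hy_tri (fun k a b h₁ h₂ h₃ h₄ => (hloc k a b h₁ h₂ h₃ h₄).2) hs hst ht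
  have hΦ := le_mul_rpow_of_local_bound_of_partition hω hω₀ htt hmesh hε (by positivity)
    (by positivity) (fun _ _ _ => totalVar_le_add Φ)
    (fun k a b h₁ h₂ h₃ h₄ => (hloc k a b h₁ h₂ h₃ h₄).1) hs hst ht
  refine ⟨hy, hΦ.trans ?_⟩
  have := Real.rpow_nonneg (hω₀ s t hs hst ht) (1 / p)
  have := hω₀ 0 T le_rfl (hs.trans (hst.trans ht)) le_rfl
  gcongr
  linarith

/-- Lemma 4.5: global estimates for the rough Euler approximation,
on partitions whose `ω`-mesh is at most `ε/2`, where `ε` is the constant of the local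
rough Euler estimate.  The constant `C` depends only on `σ`, `p` and `D`. -/
theorem rough_euler_global_estimate {d n : ℕ} (D : Set (EuclideanSpace ℝ (Fin d)))
    (T p C_D ε : ℝ) (hT : 0 ≤ T) (hp : 2 ≤ p) (hp3 : p < 3)
    (σ : EuclideanSpace ℝ (Fin d) → EuclideanSpace ℝ (Fin n) →L[ℝ] EuclideanSpace ℝ (Fin d))
    (hσ : IsC2b σ) (hH1 : CondH1 D T C_D)
    (hε : 0 < ε) (hε1 : ε ≤ 1) (hLE : LocalRoughEstimate D T σ p C_D ε) :
    ∃ C : ℝ, 0 < C ∧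
      ∀ ω : ℝ → ℝ → ℝ, IsControl T ω →
      ∀ (X1 : ℝ → ℝ → EuclideanSpace ℝ (Fin n))
        (X2 : ℝ → ℝ → EuclideanSpace ℝ (Fin n × Fin n)),
        IsRoughPath T p ω X1 X2 →
      ∀ (N : ℕ) (tt : Fin (N + 1) → ℝ), IsPartition T tt →
        (∀ (k : Fin (N + 1)) (l : Fin N), (k : ℕ) ≤ (l : ℕ) →
          |ω (tt k) (tt l.succ) - ω (tt k) (tt l.castSucc)| ≤ ε / 2) →
      ∀ (y Φ : ℝ → EuclideanSpace ℝ (Fin d)) (y₀ : EuclideanSpace ℝ (Fin d)),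
        y₀ ∈ closure D → IsRoughEuler D σ X1 X2 tt y Φ y₀ →
      ∀ s t, 0 ≤ s → s ≤ t → t ≤ T →
        ‖y t - y s‖ ≤ C * (1 + ω 0 T) * ω s t ^ (1 / p) ∧
        totalVar Φ s t ≤ C * (1 + ω 0 T) * ω s t ^ (1 / p) :=
  rough_euler_global_estimate_general D T p C_D ε hp hp3 σ hH1 hε hLE
end
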